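/- arXiv:2509.02299 — 3 statements merged into one kernel-verified Lean document; each statement's English description precedes it below -/
import Mathlib

section
/- For all real t with t > 1/e, the function G(t) = t - 1 - log t satisfies |G(t)| ≤ 3(√t - 1)². -/
/-!
With `s = √t` the claim reads `0 ≤ s² - 1 - 2 log s ≤ 3 (s - 1)²`, and the upper bound is
`(s - 1)(2 - s) ≤ log s`. For `s ≥ 1` this follows from `1 - 1/s ≤ log s`; for `1/2 ≤ s ≤ 1` it
follows from the sharper `(s - 1/s)/2 ≤ log s`. Since `e < 4`, `t > 1/e` gives `s > 1/2`.
-/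

namespace Real

lemma log_le_sub_inv_div_two {y : ℝ} (hy : 1 ≤ y) : log y ≤ (y - y⁻¹) / 2 := by
  have hy0 : 0 < y := by linarith
  -- the first term of the series of `artanh x = log ((1 + x) / (1 - x)) / 2` at `x = (y - 1)/(y + 1)`
  have h := log_div_le_sum_range_add (x := (y - 1) / (y + 1)) (by positivity)
    ((div_lt_one (by linarith)).2 (by linarith)) 0
  have hquot : (1 + (y - 1) / (y + 1)) / (1 - (y - 1) / (y + 1)) = y := by
    field_simp; ring
  have hrem : (y - 1) / (y + 1) / (1 - ((y - 1) / (y + 1)) ^ 2) = (y - y⁻¹) / 4 := by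
    have : (y + 1) ^ 2 - (y - 1) ^ 2 ≠ 0 := by nlinarith
    field_simp; ring
  rw [hquot] at h
  simp only [Finset.range_zero, Finset.sum_empty, zero_add, mul_zero, pow_one, hrem] at h
  linarith

lemma sub_one_mul_two_sub_le_log {s : ℝ} (hs : 1 / 2 ≤ s) : (s - 1) * (2 - s) ≤ log s := by
  have hs0 : 0 < s := by linarith
  rcases le_total 1 s with h1 | h1
  · calc (s - 1) * (2 - s) ≤ 1 - s⁻¹ := by
          have : 1 - s⁻¹ - (s - 1) * (2 - s) = (s - 1) ^ 3 / s := by field_simp; ring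
          rw [← sub_nonneg, this]
          exact div_nonneg (pow_nonneg (by linarith) 3) hs0.le
      _ ≤ log s := one_sub_inv_le_log_of_pos hs0
  · calc (s - 1) * (2 - s) ≤ (s - s⁻¹) / 2 := by
          have : (s - s⁻¹) / 2 - (s - 1) * (2 - s) = (1 - s) ^ 2 * (2 * s - 1) / (2 * s) := by
            field_simp; ring
          rw [← sub_nonneg, this]
          exact div_nonneg (mul_nonneg (sq_nonneg _) (by linarith)) (by linarith)
      _ ≤ log s := by
          have := log_le_sub_inv_div_two ((one_le_inv₀ hs0).2 h1)
          rw [log_inv, inv_inv] at this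
          linarith

lemma sub_one_sub_log_le_three_mul_sqrt_sub_one_sq {t : ℝ} (ht : 1 / 4 ≤ t) :
    t - 1 - log t ≤ 3 * (√t - 1) ^ 2 := by
  have hsq : √t ^ 2 = t := sq_sqrt (by linarith)
  have hlog : log t = 2 * log √t := by rw [log_sqrt (by linarith)]; ring
  have hhalf : 1 / 2 ≤ √t := (le_sqrt (by norm_num) (by linarith)).2 (by linarith)
  nlinarith [sub_one_mul_two_sub_le_log hhalf]

end Real

theorem G_bound_large (t : ℝ) (ht : t > 1 / Real.exp 1) :
    |t - 1 - Real.log t| ≤ 3 * (Real.sqrt t - 1) ^ 2 := by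
  have hquarter : 1 / 4 < t :=
    (one_div_lt_one_div_of_lt (Real.exp_pos 1) (Real.exp_one_lt_d9.trans (by norm_num))).trans ht
  rw [abs_of_nonneg (by linarith [Real.log_le_sub_one_of_pos (by linarith : 0 < t)])]
  exact Real.sub_one_sub_log_le_three_mul_sqrt_sub_one_sq hquarter.le
end

section
/- For a, b > 0, one has (√a - √b)² ≤ (1/4)·max(a,b)·(log(a/b))². -/
/-!
Put `t = √(min a b / max a b) ∈ (0, 1]`. Then `√max - √min = √max · (1 - t)`, and `1 - t ≤ -log t`,
where `-log t = |log (a / b)| / 2`; squaring gives the claim.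
-/

open Real

lemma sub_le_mul_log_div {u v : ℝ} (hu : 0 < u) (hv : 0 < v) : u - v ≤ u * log (u / v) :=
  calc u - v = u * (1 - (u / v)⁻¹) := by field_simp
    _ ≤ u * log (u / v) := by gcongr; exact one_sub_inv_le_log_of_pos (div_pos hu hv)

lemma sq_sqrt_sub_sqrt_le_of_le {a b : ℝ} (hb : 0 < b) (hba : b ≤ a) :
    (√a - √b) ^ 2 ≤ 1 / 4 * (a * log (a / b) ^ 2) := by
  have hsa : 0 < √a := sqrt_pos.mpr (hb.trans_le hba)
  have hsb : 0 < √b := sqrt_pos.mpr hb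
  have hlog : log (√a / √b) = log (a / b) / 2 := by
    rw [← sqrt_div' a hb.le, log_sqrt (div_pos (hb.trans_le hba) hb).le]
  calc (√a - √b) ^ 2 ≤ (√a * log (√a / √b)) ^ 2 :=
        pow_le_pow_left₀ (sub_nonneg.mpr (sqrt_le_sqrt hba)) (sub_le_mul_log_div hsa hsb) 2
    _ = 1 / 4 * (a * log (a / b) ^ 2) := by
        rw [hlog, mul_pow, sq_sqrt (hb.le.trans hba)]; ring

theorem sqrt_diff_sq_le_log_sq (a b : ℝ) (ha : 0 < a) (hb : 0 < b) :
    (Real.sqrt a - Real.sqrt b) ^ 2 ≤ 1 / 4 * (max a b * (Real.log (a / b)) ^ 2) := by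
  rcases le_total b a with hba | hab
  · rw [max_eq_left hba]
    exact sq_sqrt_sub_sqrt_le_of_le hb hba
  · have hlog : log (a / b) ^ 2 = log (b / a) ^ 2 := by rw [← inv_div, log_inv, neg_sq]
    rw [max_eq_right hab, hlog, ← neg_sq, neg_sub]
    exact sq_sqrt_sub_sqrt_le_of_le ha hab
end

section
/- Let σ : ℝ → (0,1) be such that √σ is L-Lipschitz and σ ≤ 1. Then for all r₁, r₂ ∈ [0, R] (R > 0) and all bounded functions w₁, w₂ on a set Z, the sup-norm bound ‖√(r₁·σ∘w₁) - √(r₂·σ∘w₂)‖_∞ ≤ √|r₁ - r₂| + L·√R·‖w₁ - w₂‖_∞ holds. -/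
/-! Insert `√(r₂ σ(w₁ z))` and use the triangle inequality. Changing the scale costs at most
`√|r₁ - r₂|` because `√` is `1/2`-Hölder and `σ ≤ 1`; changing the argument of `σ` costs at most
`√r₂ · L |w₁ z - w₂ z|` by the Lipschitz bound on `√σ`, and `r₂ ≤ R`. -/

theorem Real.abs_sqrt_sub_sqrt_le_sqrt_abs_sub {a b : ℝ} (ha : 0 ≤ a) (hb : 0 ≤ b) :
    |√a - √b| ≤ √|a - b| := by
  refine Real.abs_le_sqrt ?_
  have hsum : |√a - √b| ≤ √a + √b :=
    abs_le.mpr ⟨by linarith [Real.sqrt_nonneg a], by linarith [Real.sqrt_nonneg b]⟩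
  have hfactor : a - b = (√a - √b) * (√a + √b) := by
    rw [mul_comm, ← sq_sub_sq, Real.sq_sqrt ha, Real.sq_sqrt hb]
  calc (√a - √b) ^ 2 = |√a - √b| * |√a - √b| := by rw [sq, abs_mul_abs_self]
    _ ≤ |√a - √b| * (√a + √b) := by gcongr
    _ = |a - b| := by rw [hfactor, abs_mul, abs_of_nonneg (by positivity : 0 ≤ √a + √b)]

theorem Real.abs_sqrt_mul_sub_sqrt_mul_le {r₁ r₂ s : ℝ} (hr₁ : 0 ≤ r₁) (hr₂ : 0 ≤ r₂)
    (hs₀ : 0 ≤ s) (hs₁ : s ≤ 1) : |√(r₁ * s) - √(r₂ * s)| ≤ √|r₁ - r₂| :=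
  calc |√(r₁ * s) - √(r₂ * s)| ≤ √|r₁ * s - r₂ * s| :=
        Real.abs_sqrt_sub_sqrt_le_sqrt_abs_sub (by positivity) (by positivity)
    _ = √(|r₁ - r₂| * s) := by rw [← sub_mul, abs_mul, abs_of_nonneg hs₀]
    _ ≤ √|r₁ - r₂| := Real.sqrt_le_sqrt (mul_le_of_le_one_right (abs_nonneg _) hs₁)

theorem abs_sub_le_ciSup_abs_sub {Z : Type*} {w₁ w₂ : Z → ℝ}
    (hb₁ : ∃ C, ∀ z, |w₁ z| ≤ C) (hb₂ : ∃ C, ∀ z, |w₂ z| ≤ C) (z : Z) :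
    |w₁ z - w₂ z| ≤ ⨆ z', |w₁ z' - w₂ z'| := by
  obtain ⟨C₁, hC₁⟩ := hb₁
  obtain ⟨C₂, hC₂⟩ := hb₂
  refine le_ciSup (f := fun z' ↦ |w₁ z' - w₂ z'|) ⟨C₁ + C₂, ?_⟩ z
  rintro _ ⟨z', rfl⟩
  exact (abs_sub _ _).trans (add_le_add (hC₁ z') (hC₂ z'))

theorem sup_norm_sqrt_bound_general {Z : Type*}
    (σ : ℝ → ℝ) (L : ℝ) (hL : 0 ≤ L)
    (hrange : ∀ t, σ t ∈ Set.Ioo (0 : ℝ) 1)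
    (hlip : ∀ s t, |Real.sqrt (σ s) - Real.sqrt (σ t)| ≤ L * |s - t|)
    (R : ℝ) (r₁ r₂ : ℝ) (hr₁ : r₁ ∈ Set.Icc 0 R) (hr₂ : r₂ ∈ Set.Icc 0 R)
    (w₁ w₂ : Z → ℝ) (hb₁ : ∃ C, ∀ z, |w₁ z| ≤ C) (hb₂ : ∃ C, ∀ z, |w₂ z| ≤ C) :
    ∀ z : Z, |Real.sqrt (r₁ * σ (w₁ z)) - Real.sqrt (r₂ * σ (w₂ z))|
      ≤ Real.sqrt |r₁ - r₂| + L * Real.sqrt R * ⨆ z' : Z, |w₁ z' - w₂ z'| := by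
  intro z
  obtain ⟨hσ₀, hσ₁⟩ := hrange (w₁ z)
  have hlip_sup : |√(σ (w₁ z)) - √(σ (w₂ z))| ≤ L * ⨆ z', |w₁ z' - w₂ z'| :=
    (hlip _ _).trans (by gcongr; exact abs_sub_le_ciSup_abs_sub hb₁ hb₂ z)
  calc |√(r₁ * σ (w₁ z)) - √(r₂ * σ (w₂ z))|
      ≤ |√(r₁ * σ (w₁ z)) - √(r₂ * σ (w₁ z))| + |√(r₂ * σ (w₁ z)) - √(r₂ * σ (w₂ z))| :=
        abs_sub_le _ _ _
    _ = |√(r₁ * σ (w₁ z)) - √(r₂ * σ (w₁ z))| + √r₂ * |√(σ (w₁ z)) - √(σ (w₂ z))| := by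
        rw [Real.sqrt_mul hr₂.1, Real.sqrt_mul hr₂.1, ← mul_sub, abs_mul,
          abs_of_nonneg (Real.sqrt_nonneg _)]
    _ ≤ √|r₁ - r₂| + √R * (L * ⨆ z', |w₁ z' - w₂ z'|) := by
        gcongr
        · exact Real.abs_sqrt_mul_sub_sqrt_mul_le hr₁.1 hr₂.1 hσ₀.le hσ₁.le
        · exact hr₂.2
    _ = √|r₁ - r₂| + L * √R * ⨆ z', |w₁ z' - w₂ z'| := by ring

theorem sup_norm_sqrt_bound {Z : Type*} [Nonempty Z]
    (σ : ℝ → ℝ) (L : ℝ) (hL : 0 ≤ L)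
    (hrange : ∀ t, σ t ∈ Set.Ioo (0 : ℝ) 1)
    (hlip : ∀ s t, |Real.sqrt (σ s) - Real.sqrt (σ t)| ≤ L * |s - t|)
    (R : ℝ) (hR : 0 < R) (r₁ r₂ : ℝ) (hr₁ : r₁ ∈ Set.Icc 0 R) (hr₂ : r₂ ∈ Set.Icc 0 R)
    (w₁ w₂ : Z → ℝ) (hb₁ : ∃ C, ∀ z, |w₁ z| ≤ C) (hb₂ : ∃ C, ∀ z, |w₂ z| ≤ C) :
    ∀ z : Z, |Real.sqrt (r₁ * σ (w₁ z)) - Real.sqrt (r₂ * σ (w₂ z))|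
      ≤ Real.sqrt |r₁ - r₂| + L * Real.sqrt R * ⨆ z' : Z, |w₁ z' - w₂ z'| :=
  sup_norm_sqrt_bound_general σ L hL hrange hlip R r₁ r₂ hr₁ hr₂ w₁ w₂ hb₁ hb₂
end
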